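/- For all n, 4·(2·B_n² - 1) = C_n², where B_0 = 1, B_1 = 5, B_n = 6B_{n-1} - B_{n-2} and C_0 = 2, C_1 = 14, C_n = 6C_{n-1} - C_{n-2}. In particular, 2·B_n² - 1 is a perfect square. -/
import Mathlib


def B : ℕ → ℤ
  | 0 => 1
  | 1 => 5
  | (n+2) => 6 * B (n+1) - B n

def C : ℕ → ℤ
  | 0 => 2
  | 1 => 14
  | (n+2) => 6 * C (n+1) - C n

lemma key : ∀ n : ℕ, (C n)^2 = 8*(B n)^2 - 4 ∧ C n * C (n+1) = 8 * B n * B (n+1) - 12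
    ∧ (C (n+1))^2 = 8*(B (n+1))^2 - 4 := by
  intro n
  induction n with
  | zero => norm_num [B, C]
  | succ k ih =>
    obtain ⟨h1, h2, h3⟩ := ih
    have hB : B (k+2) = 6 * B (k+1) - B k := rfl
    have hC : C (k+2) = 6 * C (k+1) - C k := rfl
    refine ⟨h3, ?_, ?_⟩
    · rw [hB, hC]; nlinarith [h1, h2, h3]
    · rw [hB, hC]; nlinarith [h1, h2, h3]

lemma Ceven : ∀ n : ℕ, (∃ d, C n = 2*d) ∧ (∃ d, C (n+1) = 2*d) := by
  intro n
  induction n with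
  | zero => exact ⟨⟨1, rfl⟩, ⟨7, rfl⟩⟩
  | succ k ih =>
    obtain ⟨⟨d1, h1⟩, ⟨d2, h2⟩⟩ := ih
    refine ⟨⟨d2, h2⟩, ⟨6*d2 - d1, ?_⟩⟩
    have hC : C (k+2) = 6 * C (k+1) - C k := rfl
    rw [hC, h1, h2]; ring

theorem stmt12 (n : ℕ) : 4 * (2 * (B n)^2 - 1) = (C n)^2 ∧ IsSquare (2 * (B n)^2 - 1) := by
  have h := (key n).1
  obtain ⟨d, hd⟩ := (Ceven n).1
  refine ⟨by linarith, ⟨d, ?_⟩⟩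
  have : (C n)^2 = 4 * (d*d) := by rw [hd]; ring
  nlinarith
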